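/- Exact coverage under no ties. Let n ≥ 1 and let V_1, …, V_{n+1} be exchangeable real-valued random variables on a probability space such that almost surely V_i ≠ V_j for all i ≠ j. For every k with 1 ≤ k ≤ n, letting V_(k) denote the k-th order statistic of V_1, …, V_n, it holds that P( V_{n+1} ≤ V_(k) ) = k/(n+1). In particular, with α ∈ (0,1) and k = ⌈(n+1)(1−α)⌉ (assumed ≤ n), P( V_{n+1} ≤ V_(k) ) = ⌈(n+1)(1−α)⌉/(n+1). -/

import Mathlib

open MeasureTheory Finset ENNReal

/-- Exchangeability: for every permutation `σ`, the joint law of the permuted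
family equals the joint law of the original family. -/
def Exchangeable {Ω E : Type*} [MeasurableSpace Ω] [MeasurableSpace E]
    (P : Measure Ω) {N : ℕ} (Z : Fin N → Ω → E) : Prop :=
  ∀ σ : Equiv.Perm (Fin N),
    Measure.map (fun ω i => Z (σ i) ω) P = Measure.map (fun ω i => Z i ω) P

/-- The `k`-th order statistic (k-th smallest value, 1-indexed, counted with
multiplicity) of the finite family `v`. -/
noncomputable def orderStat {n : ℕ} (v : Fin n → ℝ) (k : ℕ) : ℝ :=
  (List.insertionSort (· ≤ ·) (List.ofFn v)).getD (k - 1) 0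


lemma sorted_getElem_lt_iff {s : List ℝ} (hs : s.Pairwise (· ≤ ·)) {x : ℝ} (hx : ∀ a ∈ s, x ≠ a)
    {j : ℕ} (hj : j < s.length) :
    s[j] < x ↔ j < s.countP (fun a => decide (a < x)) := by
  have hpair : ∀ (i j : ℕ) (_hi : i < s.length) (_hj : j < s.length), i < j → s[i] ≤ s[j] :=
    List.pairwise_iff_getElem.mp hs
  have hmono : ∀ (i j : ℕ) (_hi : i < s.length) (hj : j < s.length), i ≤ j → s[i] ≤ s[j] := by
    intro i j hi hj hij
    rcases Nat.lt_or_ge i j with h | h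
    · exact hpair i j hi hj h
    · have : i = j := le_antisymm hij h
      subst this; exact le_refl _
  set p : ℝ → Bool := fun a => decide (a < x) with hp
  have hsplit : s.countP p = (s.take (j+1)).countP p + (s.drop (j+1)).countP p := by
    conv_lhs => rw [← List.take_append_drop (j+1) s]
    exact List.countP_append
  have hsplit' : s.countP p = (s.take j).countP p + (s.drop j).countP p := by
    conv_lhs => rw [← List.take_append_drop j s]
    exact List.countP_append
  constructor
  · intro h
    have h1 : (s.take (j+1)).countP p = (s.take (j+1)).length := by
      rw [List.countP_eq_length]
      intro a ha
      rcases List.mem_iff_getElem.mp ha with ⟨i, hi, rfl⟩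
      have hi' : i < s.length := lt_of_lt_of_le hi (by simp [List.length_take])
      rw [List.getElem_take]
      have : i ≤ j := by
        have := hi; simp [List.length_take] at this; omega
      have := hmono i j hi' hj this
      simp [hp]
      linarith
    have h2 : (s.take (j+1)).length = j+1 := by simp [List.length_take]; omega
    omega
  · intro h
    by_contra hcon
    push_neg at hcon
    have hne : x ≠ s[j] := hx _ (List.getElem_mem hj)
    have hxj : x < s[j] := lt_of_le_of_ne hcon hne
    have h0 : (s.drop j).countP p = 0 := by
      rw [List.countP_eq_zero]
      intro a ha
      rcases List.mem_iff_getElem.mp ha with ⟨i, hi, rfl⟩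
      rw [List.getElem_drop]
      have hji : j + i < s.length := by simp [List.length_drop] at hi ⊢; omega
      have := hmono j (j+i) hj hji (Nat.le_add_right _ _)
      simp [hp]
      linarith
    have hle : (s.take j).countP p ≤ j := le_trans List.countP_le_length (by simp [List.length_take])
    omega


lemma countP_eq_sum_map {α : Type*} (p : α → Bool) (l : List α) :
    l.countP p = (l.map (fun a => if p a then 1 else 0)).sum := by
  induction l with
  | nil => simp
  | cons a l ih => by_cases h : p a <;> simp [List.countP_cons, ih, h, Nat.add_comm]

lemma countLt (n : ℕ) (v : Fin n → ℝ) (x : ℝ) :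
    (List.ofFn v).countP (fun a => decide (a < x)) = (Finset.univ.filter (fun i => v i < x)).card := by
  rw [List.ofFn_eq_map, List.countP_map, countP_eq_sum_map, Finset.card_filter]
  rw [show (∑ i : Fin n, if v i < x then 1 else 0) = (List.ofFn (fun i : Fin n => if v i < x then 1 else 0)).sum from List.sum_ofFn.symm, List.ofFn_eq_map]
  congr 1
  apply List.map_congr_left
  intro i _
  by_cases h : v i < x <;> simp [h]

lemma orderStat_le_iff {n k : ℕ} (hk1 : 1 ≤ k) (hk2 : k ≤ n) (v : Fin n → ℝ) (x : ℝ)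
    (hx : ∀ i, x ≠ v i) :
    x ≤ orderStat v k ↔ (Finset.univ.filter (fun i => v i < x)).card + 1 ≤ k := by
  set s := List.insertionSort (· ≤ ·) (List.ofFn v) with hsdef
  have hperm : s.Perm (List.ofFn v) := List.perm_insertionSort _ _
  have hlen : s.length = n := by rw [hperm.length_eq, List.length_ofFn]
  have hsort : s.Pairwise (· ≤ ·) := List.pairwise_insertionSort _ _
  have hmem : ∀ a ∈ s, x ≠ a := by
    intro a ha
    have : a ∈ List.ofFn v := hperm.mem_iff.mp ha
    rcases List.mem_ofFn.mp this with ⟨i, rfl⟩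
    exact hx i
  have hj : k - 1 < s.length := by omega
  have hgd : orderStat v k = s[k-1] := by
    rw [orderStat, ← hsdef, List.getD_eq_getElem _ _ hj]
  have hcount : s.countP (fun a => decide (a < x)) = (Finset.univ.filter (fun i => v i < x)).card := by
    rw [hperm.countP_eq, countLt]
  have hiff := sorted_getElem_lt_iff hsort hmem hj
  rw [hgd, hcount] at *
  have hne : x ≠ s[k-1] := hmem _ (List.getElem_mem hj)
  constructor
  · intro h
    have : ¬ s[k-1] < x := not_lt.mpr h
    rw [hiff] at this
    omega
  · intro h
    have : ¬ (k - 1 < (Finset.univ.filter (fun i => v i < x)).card) := by omega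
    rw [← hiff] at this
    exact not_lt.mp this
open Finset

lemma card_filter_perm {m : ℕ} (σ : Equiv.Perm (Fin m)) (p : Fin m → Prop) [DecidablePred p] :
    (Finset.univ.filter fun i => p (σ i)).card = (Finset.univ.filter p).card := by
  have himg : Finset.image σ (Finset.univ.filter fun i => p (σ i)) = Finset.univ.filter p := by
    ext j
    simp only [Finset.mem_image, Finset.mem_filter, Finset.mem_univ, true_and]
    constructor
    · rintro ⟨i, hi, rfl⟩; exact hi
    · intro hj; exact ⟨σ.symm j, by simpa using hj, by simp⟩
  rw [← himg, Finset.card_image_of_injective _ σ.injective]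

section rank
variable {m : ℕ} (w : Fin m → ℝ)

noncomputable def rankOf (j : Fin m) : ℕ := (Finset.univ.filter fun i => w i ≤ w j).card

lemma one_le_rankOf (j : Fin m) : 1 ≤ rankOf w j := by
  have : j ∈ Finset.univ.filter fun i => w i ≤ w j := by simp
  exact Finset.card_pos.mpr ⟨j, this⟩

lemma rankOf_le (j : Fin m) : rankOf w j ≤ m := by
  simpa [rankOf] using Finset.card_filter_le Finset.univ fun i => w i ≤ w j

lemma rankOf_lt_of_lt {a b : Fin m} (h : w a < w b) : rankOf w a < rankOf w b := by
  apply Finset.card_lt_card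
  constructor
  · intro i hi
    simp only [Finset.mem_filter, Finset.mem_univ, true_and] at *
    exact le_trans hi h.le
  · intro hsub
    have hb : b ∈ Finset.univ.filter fun i => w i ≤ w b := by simp
    have := hsub hb
    simp only [Finset.mem_filter, Finset.mem_univ, true_and] at this
    exact absurd this (not_le.mpr h)

lemma rankOf_injective (hw : ∀ i j : Fin m, i ≠ j → w i ≠ w j) :
    Function.Injective (rankOf w) := by
  intro a b hab
  by_contra hne
  rcases lt_trichotomy (w a) (w b) with h | h | h
  · exact absurd hab (Nat.ne_of_lt (rankOf_lt_of_lt w h))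
  · exact hw a b hne h
  · exact absurd hab.symm (Nat.ne_of_lt (rankOf_lt_of_lt w h))

lemma rankOf_surjective (hw : ∀ i j : Fin m, i ≠ j → w i ≠ w j) (r : ℕ)
    (hr1 : 1 ≤ r) (hr2 : r ≤ m) : ∃ j, rankOf w j = r := by
  have hm : 0 < m := lt_of_lt_of_le hr1 hr2
  let f : Fin m → Fin m := fun j => ⟨rankOf w j - 1, by
    have h1 := one_le_rankOf w j; have h2 := rankOf_le w j; omega⟩
  have hf : Function.Injective f := by
    intro a b hab
    apply rankOf_injective w hw
    have := Fin.mk.injEq .. ▸ hab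
    have h1 := one_le_rankOf w a
    have h2 := one_le_rankOf w b
    have : (rankOf w a - 1 : ℕ) = rankOf w b - 1 := congrArg Fin.val hab
    omega
  have hsurj : Function.Surjective f := Finite.surjective_of_injective hf
  rcases hsurj ⟨r - 1, by omega⟩ with ⟨j, hj⟩
  have : rankOf w j - 1 = r - 1 := congrArg Fin.val hj
  have h1 := one_le_rankOf w j
  exact ⟨j, by omega⟩
end rank

lemma rank_last_eq (n : ℕ) (w : Fin (n+1) → ℝ)
    (hw : ∀ j : Fin n, w j.castSucc ≠ w (Fin.last n)) :
    rankOf w (Fin.last n) =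
      (Finset.univ.filter fun j : Fin n => w j.castSucc < w (Fin.last n)).card + 1 := by
  rw [rankOf, Finset.card_filter, Finset.card_filter, Fin.sum_univ_castSucc]
  simp only [le_refl, if_true]
  congr 1
  apply Finset.sum_congr rfl
  intro j _
  by_cases h : w j.castSucc < w (Fin.last n)
  · simp [h, h.le]
  · have : ¬ w j.castSucc ≤ w (Fin.last n) := fun hle => h (lt_of_le_of_ne hle (hw j))
    simp [h, this]


/-- Exact coverage under no ties: for exchangeable variables that are almost
surely pairwise distinct, the probability that the last variable is at most the
`k`-th order statistic of the first `n` is exactly `k / (n + 1)`.  In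
particular, taking `k = ⌈(n + 1)(1 - α)⌉` (assumed `≤ n`) gives coverage
exactly `⌈(n + 1)(1 - α)⌉ / (n + 1)`. -/
theorem exact_coverage_no_ties
    {Ω : Type*} [MeasurableSpace Ω] (P : Measure Ω) [IsProbabilityMeasure P]
    (n : ℕ) (hn : 1 ≤ n)
    (V : Fin (n + 1) → Ω → ℝ)
    (hmeas : ∀ i, Measurable (V i))
    (hexch : Exchangeable P V)
    (hties : ∀ᵐ ω ∂P, ∀ i j : Fin (n + 1), i ≠ j → V i ω ≠ V j ω) :
    ∀ k : ℕ, 1 ≤ k → k ≤ n →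
      P {ω | V (Fin.last n) ω ≤ orderStat (fun i : Fin n => V i.castSucc ω) k} =
        ENNReal.ofReal ((k : ℝ) / ((n : ℝ) + 1)) := by
  intro k hk1 hk2
  classical
  set W : Ω → (Fin (n+1) → ℝ) := fun ω i => V i ω with hWdef
  have hWmeas : Measurable W := measurable_pi_lambda _ hmeas
  set R : Fin (n+1) → Ω → ℕ := fun j ω => rankOf (W ω) j with hRdef
  have hRmeas : ∀ j, Measurable (R j) := by
    intro j
    have : R j = fun ω => ∑ i : Fin (n+1), if V i ω ≤ V j ω then 1 else 0 := by
      funext ω; rw [hRdef]; exact Finset.card_filter _ _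
    rw [this]
    exact Finset.measurable_sum _ fun i _ =>
      Measurable.ite (measurableSet_le (hmeas i) (hmeas j)) measurable_const measurable_const
  set F : (Fin (n+1) → ℝ) → ℕ := fun v => rankOf v (Fin.last n) with hFdef
  have hFmeas : Measurable F := by
    have : F = fun v => ∑ i : Fin (n+1), if v i ≤ v (Fin.last n) then 1 else 0 := by
      funext v; rw [hFdef]; exact Finset.card_filter _ _
    rw [this]
    exact Finset.measurable_sum _ fun i _ =>
      Measurable.ite (measurableSet_le (measurable_pi_apply i) (measurable_pi_apply _))
        measurable_const measurable_const
  -- identical distribution of ranks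
  have hid : ∀ j r, P {ω | R j ω = r} = P {ω | R (Fin.last n) ω = r} := by
    intro j r
    set σ : Equiv.Perm (Fin (n+1)) := Equiv.swap (Fin.last n) j with hσdef
    have hσ : σ (Fin.last n) = j := Equiv.swap_apply_left _ _
    have hWσ : Measurable (fun ω (i : Fin (n+1)) => V (σ i) ω) :=
      measurable_pi_lambda _ fun i => hmeas _
    have hS : MeasurableSet (F ⁻¹' {r}) := hFmeas (measurableSet_singleton r)
    have h1 : (fun ω (i : Fin (n+1)) => V (σ i) ω) ⁻¹' (F ⁻¹' {r}) = {ω | R j ω = r} := by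
      ext ω
      simp only [Set.mem_preimage, Set.mem_singleton_iff, Set.mem_setOf_eq]
      have : F (fun i => V (σ i) ω) = R j ω := by
        show (Finset.univ.filter fun i => V (σ i) ω ≤ V (σ (Fin.last n)) ω).card
            = (Finset.univ.filter fun i => V i ω ≤ V j ω).card
        rw [hσ]
        exact card_filter_perm σ (fun i => V i ω ≤ V j ω)
      rw [this]
    have h2 : W ⁻¹' (F ⁻¹' {r}) = {ω | R (Fin.last n) ω = r} := rfl
    calc P {ω | R j ω = r} = Measure.map (fun ω i => V (σ i) ω) P (F ⁻¹' {r}) := by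
          rw [Measure.map_apply hWσ hS, h1]
      _ = Measure.map W P (F ⁻¹' {r}) := by rw [hexch σ]
      _ = P {ω | R (Fin.last n) ω = r} := by rw [Measure.map_apply hWmeas hS, h2]
  -- the no-ties event
  set T : Set Ω := {ω | ∀ i j : Fin (n+1), i ≠ j → V i ω ≠ V j ω} with hTdef
  have hTmeas : MeasurableSet T := by
    have hT : T = ⋂ (i : Fin (n+1)) (j : Fin (n+1)), {ω | i ≠ j → V i ω ≠ V j ω} := by
      ext ω; simp [hTdef, Set.mem_iInter]
    rw [hT]
    refine MeasurableSet.iInter fun i => MeasurableSet.iInter fun j => ?_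
    by_cases h : i = j
    · have : {ω | i ≠ j → V i ω ≠ V j ω} = Set.univ := by ext ω; simp [h]
      rw [this]; exact MeasurableSet.univ
    · have : {ω | i ≠ j → V i ω ≠ V j ω} = {ω | V i ω = V j ω}ᶜ := by
        ext ω; simp [h]
      rw [this]
      exact (measurableSet_eq_fun (hmeas i) (hmeas j)).compl
  have hTc : P Tᶜ = 0 := by
    have := ae_iff.mp hties
    convert this using 2
    rfl
  have hT1 : P T = 1 := by
    rw [← prob_compl_eq_zero_iff hTmeas]
    exact hTc
  -- probability of each rank value
  have hAr : ∀ r : ℕ, 1 ≤ r → r ≤ n + 1 →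
      P {ω | R (Fin.last n) ω = r} = ((n : ℝ≥0∞) + 1)⁻¹ := by
    intro r hr1 hr2
    have hcover : (⋃ j : Fin (n+1), ({ω | R j ω = r} ∩ T)) = T := by
      apply Set.Subset.antisymm
      · exact Set.iUnion_subset fun j => Set.inter_subset_right
      · intro ω hω
        rcases rankOf_surjective (W ω) hω r hr1 hr2 with ⟨j, hj⟩
        exact Set.mem_iUnion.mpr ⟨j, ⟨hj, hω⟩⟩
    have hdisj : Pairwise (Function.onFun Disjoint fun j => {ω | R j ω = r} ∩ T) := by
      intro a b hab
      rw [Function.onFun, Set.disjoint_left]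
      rintro ω ⟨ha, hωT⟩ ⟨hb, _⟩
      exact hab (rankOf_injective (W ω) hωT (ha.trans hb.symm))
    have hmeasj : ∀ j : Fin (n+1), MeasurableSet ({ω | R j ω = r} ∩ T) :=
      fun j => ((hRmeas j) (measurableSet_singleton r)).inter hTmeas
    have hsum : ∑ j : Fin (n+1), P ({ω | R j ω = r} ∩ T) = 1 := by
      rw [← tsum_fintype (L := SummationFilter.unconditional _), ← measure_iUnion hdisj hmeasj, hcover, hT1]
    have hterm : ∀ j : Fin (n+1), P ({ω | R j ω = r} ∩ T) = P {ω | R (Fin.last n) ω = r} := by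
      intro j
      rw [measure_inter_conull hTc, hid j r]
    rw [Finset.sum_congr rfl (fun j _ => hterm j), Finset.sum_const, Finset.card_univ,
      Fintype.card_fin] at hsum
    have hne0 : ((n : ℝ≥0∞) + 1) ≠ 0 := by simp
    have hnetop : ((n : ℝ≥0∞) + 1) ≠ ⊤ := by simp
    have : ((n : ℝ≥0∞) + 1)⁻¹ * ((n + 1 : ℕ) • P {ω | R (Fin.last n) ω = r}) =
        ((n : ℝ≥0∞) + 1)⁻¹ * 1 := by rw [hsum]
    rw [nsmul_eq_mul, ← mul_assoc, mul_one] at this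
    rw [show ((n + 1 : ℕ) : ℝ≥0∞) = (n : ℝ≥0∞) + 1 by push_cast; ring,
      ENNReal.inv_mul_cancel hne0 hnetop, one_mul] at this
    exact this
  -- probability that rank of last is at most k
  have hCk : P {ω | R (Fin.last n) ω ≤ k} = (k : ℝ≥0∞) * ((n : ℝ≥0∞) + 1)⁻¹ := by
    have hsplit : {ω | R (Fin.last n) ω ≤ k} =
        ⋃ r ∈ Finset.Icc 1 k, {ω | R (Fin.last n) ω = r} := by
      ext ω
      simp only [Set.mem_setOf_eq, Set.mem_iUnion, Finset.mem_Icc]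
      constructor
      · intro h
        exact ⟨R (Fin.last n) ω, ⟨one_le_rankOf (W ω) (Fin.last n), h⟩, rfl⟩
      · rintro ⟨r, ⟨_, hr2⟩, hr⟩
        omega
    have hdis : Set.PairwiseDisjoint (Finset.Icc 1 k : Set ℕ)
        (fun r => {ω | R (Fin.last n) ω = r}) := by
      intro a _ b _ hab
      rw [Function.onFun, Set.disjoint_left]
      rintro ω ha hb
      simp only [Set.mem_setOf_eq] at ha hb
      exact hab (ha.symm.trans hb)
    have hmb : ∀ r ∈ Finset.Icc 1 k, MeasurableSet {ω | R (Fin.last n) ω = r} :=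
      fun r _ => (hRmeas _) (measurableSet_singleton r)
    rw [hsplit, measure_biUnion_finset hdis hmb]
    calc ∑ r ∈ Finset.Icc 1 k, P {ω | R (Fin.last n) ω = r}
        = ∑ _r ∈ Finset.Icc 1 k, ((n : ℝ≥0∞) + 1)⁻¹ := by
          apply Finset.sum_congr rfl
          intro r hr
          rw [Finset.mem_Icc] at hr
          exact hAr r hr.1 (le_trans hr.2 (by omega))
      _ = (k : ℝ≥0∞) * ((n : ℝ≥0∞) + 1)⁻¹ := by
          rw [Finset.sum_const, Nat.card_Icc, nsmul_eq_mul]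
          norm_num
  -- identify the target event with the rank event, up to the null set
  have hEvent : {ω | V (Fin.last n) ω ≤ orderStat (fun i : Fin n => V i.castSucc ω) k} ∩ T
      = {ω | R (Fin.last n) ω ≤ k} ∩ T := by
    ext ω
    simp only [Set.mem_inter_iff, Set.mem_setOf_eq, and_congr_left_iff]
    intro hωT
    have hne : ∀ i : Fin n, V (Fin.last n) ω ≠ V i.castSucc ω := by
      intro i
      exact hωT (Fin.last n) i.castSucc (Fin.ne_of_gt (Fin.castSucc_lt_last i))
    have hne' : ∀ j : Fin n, (W ω) j.castSucc ≠ (W ω) (Fin.last n) := by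
      intro j
      exact hωT j.castSucc (Fin.last n) (Fin.ne_of_lt (Fin.castSucc_lt_last j))
    rw [orderStat_le_iff hk1 hk2 _ _ hne]
    have hrank := rank_last_eq n (W ω) hne'
    constructor
    · intro h
      show rankOf (W ω) (Fin.last n) ≤ k
      rw [hrank]
      exact h
    · intro h
      have : rankOf (W ω) (Fin.last n) ≤ k := h
      rw [hrank] at this
      exact this
  have hfinal : P {ω | V (Fin.last n) ω ≤ orderStat (fun i : Fin n => V i.castSucc ω) k}
      = (k : ℝ≥0∞) * ((n : ℝ≥0∞) + 1)⁻¹ := by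
    rw [← measure_inter_conull hTc, hEvent, measure_inter_conull hTc, hCk]
  rw [hfinal]
  rw [ENNReal.ofReal_div_of_pos (by positivity)]
  rw [show ((k:ℝ)) = ((k:ℕ):ℝ) from rfl, ENNReal.ofReal_natCast]
  rw [show ((n:ℝ) + 1) = (((n:ℕ):ℝ) + 1) from rfl, ENNReal.ofReal_add (by positivity) (by norm_num),
    ENNReal.ofReal_natCast, ENNReal.ofReal_one]
  rw [div_eq_mul_inv]
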